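/- arXiv:1604.05564 — 2 statements merged into one kernel-verified Lean document; each statement's English description precedes it below -/
import Mathlib

section
/- Let Λ > 0 and N ∈ ℕ, and let w_n be the normalized oscillator eigenfunctions. Then there exists c_N > 0 such that for every H ≥ 1 and all j, k ∈ {0, …, N}: |∫_{−H^{1/2}/4}^{H^{1/2}/4} w_j(ζ) w_k(ζ) dζ − δ_{jk}| ≤ c_N H^{−1/2}. -/
noncomputable section
open MeasureTheory Real

/-- The physicists' Hermite polynomials, defined by `H₀ = 1` and
`H_{n+1}(t) = 2t H_n(t) − H_n'(t)`. -/
noncomputable def physHermite : ℕ → Polynomial ℝ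
  | 0 => 1
  | n + 1 => 2 * Polynomial.X * physHermite n - Polynomial.derivative (physHermite n)

/-- The normalized eigenfunctions of the harmonic-oscillator equation
`−w'' + 4Λζ²w = μw` :
`w_n(ζ) = (2ⁿ n! √π)^{−1/2} (2√Λ)^{1/4} exp(−√Λ ζ²) H_n((4Λ)^{1/4} ζ)`. -/
noncomputable def oscEigen (Λ : ℝ) (n : ℕ) (ζ : ℝ) : ℝ :=
  ((2 : ℝ) ^ n * (Nat.factorial n) * Real.sqrt π) ^ (-(1 : ℝ) / 2) *
    (2 * Real.sqrt Λ) ^ ((1 : ℝ) / 4) *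
    (Real.exp (-(Real.sqrt Λ) * ζ ^ 2) * (physHermite n).eval ((4 * Λ) ^ ((1 : ℝ) / 4) * ζ))

/-!
With `a = (4Λ)^{1/4}`, the product `w_j(ζ) w_k(ζ)` is, up to normalising constants,
`H_j H_k e^{-x²}` at `x = aζ`. Orthonormality on all of `ℝ` is therefore Hermite orthogonality,
which follows by moving the raising operator `P ↦ 2xP - P'` across the Gaussian integral: it is
adjoint to differentiation because `(2xP - P') e^{-x²} = -(P e^{-x²})'`. The truncated integral
misses only `|ζ| ≥ R = H^{1/2}/4`, where `|w_j w_k| ≤ |ζ w_j w_k| / R`; Gaussian decay makes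
`ζ w_j w_k` integrable, and the finitely many pairs `j, k ≤ N` give a uniform constant.
-/

open Polynomial
open scoped Nat

theorem physHermite_succ (n : ℕ) :
    physHermite (n + 1) = 2 * X * physHermite n - derivative (physHermite n) := rfl

theorem derivative_physHermite_succ (n : ℕ) :
    derivative (physHermite (n + 1)) = C (2 * (n + 1) : ℝ) * physHermite n := by
  induction n with
  | zero => simp [physHermite, map_ofNat]
  | succ n ih =>
    have hD : derivative (physHermite n) = 2 * X * physHermite n - physHermite (n + 1) := by
      rw [physHermite]; ring
    rw [physHermite, derivative_sub, derivative_mul, derivative_mul, ih, derivative_C_mul, hD]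
    simp only [derivative_ofNat, derivative_X, map_mul, map_add, map_ofNat, map_one, map_natCast,
      Nat.cast_add, Nat.cast_one]
    ring

theorem integrable_eval_mul_exp_neg_sq (P : ℝ[X]) :
    Integrable fun x : ℝ => P.eval x * exp (-x ^ 2) := by
  induction P using Polynomial.induction_on' with
  | monomial n c =>
    have h := integrable_rpow_mul_exp_neg_mul_sq one_pos (s := n)
      (neg_one_lt_zero.trans_le n.cast_nonneg)
    simpa [mul_assoc, Real.rpow_natCast] using h.const_mul c
  | add p q hp hq => simpa [add_mul] using hp.fun_add hq

def gaussIntegral (P : ℝ[X]) : ℝ := ∫ x, P.eval x * exp (-x ^ 2)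

theorem gaussIntegral_sub (P Q : ℝ[X]) :
    gaussIntegral (P - Q) = gaussIntegral P - gaussIntegral Q := by
  simp only [gaussIntegral, eval_sub, sub_mul]
  exact integral_sub (integrable_eval_mul_exp_neg_sq P) (integrable_eval_mul_exp_neg_sq Q)

theorem gaussIntegral_C_mul (c : ℝ) (P : ℝ[X]) :
    gaussIntegral (C c * P) = c * gaussIntegral P := by
  simp only [gaussIntegral, eval_mul, eval_C, mul_assoc, integral_const_mul]

theorem gaussIntegral_derivative_sub (P : ℝ[X]) :
    gaussIntegral (derivative P - 2 * X * P) = 0 := by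
  rw [gaussIntegral]
  refine integral_eq_zero_of_hasDerivAt_of_integrable (fun x => ?_)
    (integrable_eval_mul_exp_neg_sq _) (integrable_eval_mul_exp_neg_sq P)
  refine ((P.hasDerivAt x).fun_mul (hasDerivAt_pow 2 x).fun_neg.exp).congr_deriv ?_
  simp only [eval_sub, eval_mul, eval_ofNat, eval_X]
  ring

theorem gaussIntegral_raise_mul (P Q : ℝ[X]) :
    gaussIntegral ((2 * X * P - derivative P) * Q) = gaussIntegral (P * derivative Q) := by
  have h : (2 * X * P - derivative P) * Q
      = P * derivative Q - (derivative (P * Q) - 2 * X * (P * Q)) := by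
    rw [derivative_mul]; ring
  rw [h, gaussIntegral_sub, gaussIntegral_derivative_sub, sub_zero]

def physHermiteNormSq (n : ℕ) : ℝ := 2 ^ n * n ! * √π

theorem physHermiteNormSq_pos (n : ℕ) : 0 < physHermiteNormSq n := by
  unfold physHermiteNormSq; have := pi_pos; positivity

theorem gaussIntegral_physHermite_mul_physHermite (j k : ℕ) :
    gaussIntegral (physHermite j * physHermite k)
      = if j = k then physHermiteNormSq j else 0 := by
  unfold physHermiteNormSq
  induction j generalizing k with
  | zero =>
    cases k with
    | zero => simpa [gaussIntegral, physHermite] using integral_gaussian 1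
    | succ k =>
      rw [mul_comm, physHermite_succ, gaussIntegral_raise_mul]
      simp [physHermite, gaussIntegral]
  | succ j ih =>
    rw [physHermite_succ, gaussIntegral_raise_mul]
    cases k with
    | zero => simp [physHermite, gaussIntegral]
    | succ k =>
      rw [derivative_physHermite_succ, mul_left_comm, gaussIntegral_C_mul, ih]
      split_ifs <;> simp_all [Nat.factorial_succ]; ring

section Oscillator

variable {Λ : ℝ}

def oscScale (Λ : ℝ) : ℝ := (4 * Λ) ^ (1 / 4 : ℝ)

theorem oscScale_pos (hΛ : 0 < Λ) : 0 < oscScale Λ := rpow_pos_of_pos (by positivity) _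

theorem oscScale_eq_sqrt (hΛ : 0 ≤ Λ) : oscScale Λ = √(2 * √Λ) := by
  rw [oscScale, sqrt_eq_rpow, show 4 * Λ = (2 * √Λ) ^ (2 : ℝ) by
    rw [rpow_two, mul_pow, sq_sqrt hΛ]; norm_num, ← rpow_mul (by positivity)]
  norm_num

theorem oscEigen_mul_oscEigen (hΛ : 0 ≤ Λ) (j k : ℕ) (ζ : ℝ) :
    oscEigen Λ j ζ * oscEigen Λ k ζ
      = physHermiteNormSq j ^ (-(1 : ℝ) / 2) * physHermiteNormSq k ^ (-(1 : ℝ) / 2)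
          * oscScale Λ * ((physHermite j * physHermite k).eval (oscScale Λ * ζ)
            * exp (-(oscScale Λ * ζ) ^ 2)) := by
  have hs : 0 ≤ 2 * √Λ := by positivity
  have hroot : (2 * √Λ) ^ (1 / 4 : ℝ) * (2 * √Λ) ^ (1 / 4 : ℝ) = oscScale Λ := by
    rw [← rpow_add' hs (by norm_num), oscScale_eq_sqrt hΛ, sqrt_eq_rpow (2 * √Λ)]
    norm_num
  have hexp : exp (-√Λ * ζ ^ 2) * exp (-√Λ * ζ ^ 2) = exp (-(oscScale Λ * ζ) ^ 2) := by
    rw [← exp_add, mul_pow, oscScale_eq_sqrt hΛ, sq_sqrt hs]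
    ring_nf
  rw [oscEigen, oscEigen, ← oscScale, ← hexp, ← hroot, eval_mul, physHermiteNormSq,
    physHermiteNormSq]
  ring

theorem integrable_oscEigen_mul_oscEigen (hΛ : 0 < Λ) (j k : ℕ) :
    Integrable fun ζ => oscEigen Λ j ζ * oscEigen Λ k ζ := by
  simpa only [oscEigen_mul_oscEigen hΛ.le] using
    ((integrable_eval_mul_exp_neg_sq _).comp_mul_left' (oscScale_pos hΛ).ne').const_mul _

theorem integrable_mul_oscEigen_mul_oscEigen (hΛ : 0 < Λ) (j k : ℕ) :
    Integrable fun ζ => ζ * (oscEigen Λ j ζ * oscEigen Λ k ζ) := by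
  have h := ((integrable_eval_mul_exp_neg_sq (X * (physHermite j * physHermite k))).comp_mul_left'
    (oscScale_pos hΛ).ne').const_mul
      (physHermiteNormSq j ^ (-(1 : ℝ) / 2) * physHermiteNormSq k ^ (-(1 : ℝ) / 2))
  refine h.congr (ae_of_all _ fun ζ => ?_)
  simp only [oscEigen_mul_oscEigen hΛ.le, eval_mul, eval_X]
  field_simp

theorem integral_oscEigen_mul_oscEigen (hΛ : 0 < Λ) (j k : ℕ) :
    ∫ ζ, oscEigen Λ j ζ * oscEigen Λ k ζ = if j = k then 1 else 0 := by
  have ha := oscScale_pos hΛ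
  simp only [oscEigen_mul_oscEigen hΛ.le, integral_const_mul,
    Measure.integral_comp_mul_left fun x => (physHermite j * physHermite k).eval x * exp (-x ^ 2),
    abs_of_pos (inv_pos.2 ha), smul_eq_mul]
  rw [← gaussIntegral, gaussIntegral_physHermite_mul_physHermite]
  split_ifs with hjk
  · subst hjk
    rw [← rpow_add (physHermiteNormSq_pos j)]
    norm_num [rpow_neg_one]
    field_simp [(physHermiteNormSq_pos j).ne']
  · simp

end Oscillator

theorem norm_setIntegral_Ioo_sub_integral_le {E : Type*} [NormedAddCommGroup E]
    [NormedSpace ℝ E] {μ : Measure ℝ} {f : ℝ → E} (hf : Integrable f μ)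
    (hxf : Integrable (fun x => x • f x) μ) {R : ℝ} (hR : 0 < R) :
    ‖(∫ x in Set.Ioo (-R) R, f x ∂μ) - ∫ x, f x ∂μ‖ ≤ (∫ x, ‖x • f x‖ ∂μ) / R := by
  rw [← integral_add_compl measurableSet_Ioo hf, sub_add_cancel_left, norm_neg, ← integral_div]
  have hmoment : Integrable (fun x => ‖x • f x‖ / R) μ := hxf.norm.div_const R
  calc ‖∫ x in (Set.Ioo (-R) R)ᶜ, f x ∂μ‖ ≤ ∫ x in (Set.Ioo (-R) R)ᶜ, ‖f x‖ ∂μ :=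
        norm_integral_le_integral_norm _
    _ ≤ ∫ x in (Set.Ioo (-R) R)ᶜ, ‖x • f x‖ / R ∂μ := by
        refine setIntegral_mono_on hf.norm.integrableOn hmoment.integrableOn
          measurableSet_Ioo.compl fun x hx => ?_
        have hRx : R ≤ |x| := not_lt.1 fun h => hx (abs_lt.1 h)
        rw [norm_smul, norm_eq_abs, le_div_iff₀ hR, mul_comm]
        exact mul_le_mul_of_nonneg_right hRx (norm_nonneg _)
    _ ≤ ∫ x, ‖x • f x‖ / R ∂μ :=
        setIntegral_le_integral hmoment (ae_of_all _ fun x => by positivity)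

theorem truncated_almost_orthonormality_oscillator
    (Λ : ℝ) (hΛ : 0 < Λ) (N : ℕ) :
    ∃ c : ℝ, 0 < c ∧ ∀ H : ℝ, 1 ≤ H → ∀ j k : ℕ, j ≤ N → k ≤ N →
      |(∫ ζ in Set.Ioo (-(H ^ ((1 : ℝ) / 2)) / 4) (H ^ ((1 : ℝ) / 2) / 4),
          oscEigen Λ j ζ * oscEigen Λ k ζ) - (if j = k then (1 : ℝ) else 0)|
        ≤ c * H ^ (-(1 : ℝ) / 2) := by
  obtain ⟨M, hM⟩ := Finite.exists_le fun jk : Fin (N + 1) × Fin (N + 1) =>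
    4 * ∫ ζ, ‖ζ • (oscEigen Λ jk.1 ζ * oscEigen Λ jk.2 ζ)‖
  refine ⟨max M 1, by positivity, fun H hH j k hj hk => ?_⟩
  have hH : 0 < H := one_pos.trans_le hH
  have hR : 0 < H ^ (1 / 2 : ℝ) / 4 := by positivity
  rw [neg_div, ← integral_oscEigen_mul_oscEigen hΛ, ← norm_eq_abs]
  calc _ ≤ (∫ ζ, ‖ζ • (oscEigen Λ j ζ * oscEigen Λ k ζ)‖) / (H ^ (1 / 2 : ℝ) / 4) :=
        norm_setIntegral_Ioo_sub_integral_le (integrable_oscEigen_mul_oscEigen hΛ j k)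
          (integrable_mul_oscEigen_mul_oscEigen hΛ j k) hR
    _ = (4 * ∫ ζ, ‖ζ • (oscEigen Λ j ζ * oscEigen Λ k ζ)‖) * H ^ (-(1 : ℝ) / 2) := by
        rw [neg_div, rpow_neg hH.le]; field_simp
    _ ≤ max M 1 * H ^ (-(1 : ℝ) / 2) := by
        gcongr
        exact (hM (⟨j, by omega⟩, ⟨k, by omega⟩)).trans (le_max_left _ _)
end
end

section
/- Let V and W be real inner product spaces, N ∈ ℕ, Λ > 0, and 0 < ε ≤ 1/(2N). Suppose Φ_1, …, Φ_N ∈ V and Ψ_1, …, Ψ_N ∈ W satisfy |⟨Φ_j, Φ_k⟩ − δ_{jk}| ≤ ε and |⟨Ψ_j, Ψ_k⟩ − Λ δ_{jk}| ≤ ε for all j, k ∈ {1, …, N}. Then Φ_1, …, Φ_N are linearly independent, and for every α ∈ ℝ^N with ∑_{j=1}^N α_j² = 1 one has ‖∑_{j=1}^N α_j Ψ_j‖² ≤ (Λ + 2N(1+Λ)ε) ‖∑_{j=1}^N α_j Φ_j‖². -/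
/-! A Gram matrix within `ε` of `c • 1` entrywise gives a quadratic form within `ε N ‖α‖²` of
`c ‖α‖²`, by Cauchy–Schwarz `(∑ |αᵢ|)² ≤ N ∑ αᵢ²`. For `Φ` this makes `‖∑ αⱼ Φⱼ‖² ≥ (1 - εN)‖α‖²`,
hence linear independence since `εN ≤ 1/2`; for `Ψ` it gives `‖∑ αⱼ Ψⱼ‖² ≤ Λ + εN` on the unit
sphere, and comparing the two bounds costs the factor in the conclusion. -/

noncomputable section
open Finset

section GramPerturbation

variable {ι : Type*} [Fintype ι] {E : Type*} [NormedAddCommGroup E] [InnerProductSpace ℝ E]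

theorem norm_sq_sum_smul (α : ι → ℝ) (v : ι → E) :
    ‖∑ i, α i • v i‖ ^ 2 = ∑ i, ∑ j, α i * α j * inner ℝ (v i) (v j) := by
  rw [← real_inner_self_eq_norm_sq]
  simp_rw [sum_inner, inner_sum, real_inner_smul_left, real_inner_smul_right, mul_assoc]

variable [DecidableEq ι]

theorem abs_quadForm_sub_le_of_abs_sub_le {g : ι → ι → ℝ} {c ε : ℝ} (hε : 0 ≤ ε)
    (hg : ∀ i j, |g i j - c * (if i = j then 1 else 0)| ≤ ε) (α : ι → ℝ) :
    |∑ i, ∑ j, α i * α j * g i j - c * ∑ i, α i ^ 2| ≤ ε * Fintype.card ι * ∑ i, α i ^ 2 := by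
  have hdiag : c * ∑ i, α i ^ 2 = ∑ i, ∑ j, α i * α j * (c * if i = j then 1 else 0) := by
    simp [mul_sum, sq, mul_comm]
  have habs : (∑ i, |α i|) ^ 2 ≤ Fintype.card ι * ∑ i, α i ^ 2 := by
    simpa only [sq_abs, card_univ] using
      sq_sum_le_card_mul_sum_sq (s := univ) (f := fun i => |α i|)
  calc |∑ i, ∑ j, α i * α j * g i j - c * ∑ i, α i ^ 2|
      = |∑ i, ∑ j, α i * α j * (g i j - c * if i = j then 1 else 0)| := by
        simp only [hdiag, ← sum_sub_distrib, mul_sub]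
    _ ≤ ∑ i, ∑ j, |α i| * |α j| * ε := by
        refine (abs_sum_le_sum_abs _ _).trans (sum_le_sum fun i _ => ?_)
        refine (abs_sum_le_sum_abs _ _).trans (sum_le_sum fun j _ => ?_)
        rw [abs_mul, abs_mul]
        exact mul_le_mul_of_nonneg_left (hg i j) (by positivity)
    _ = ε * (∑ i, |α i|) ^ 2 := by
        simp only [sq, sum_mul, mul_sum]
        exact sum_congr rfl fun i _ => sum_congr rfl fun j _ => by ring
    _ ≤ ε * Fintype.card ι * ∑ i, α i ^ 2 := by
        rw [mul_assoc]
        exact mul_le_mul_of_nonneg_left habs hε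

theorem abs_norm_sq_sum_smul_sub_le {v : ι → E} {c ε : ℝ} (hε : 0 ≤ ε)
    (hv : ∀ i j, |inner ℝ (v i) (v j) - c * (if i = j then 1 else 0)| ≤ ε) (α : ι → ℝ) :
    |‖∑ i, α i • v i‖ ^ 2 - c * ∑ i, α i ^ 2| ≤ ε * Fintype.card ι * ∑ i, α i ^ 2 := by
  rw [norm_sq_sum_smul]
  exact abs_quadForm_sub_le_of_abs_sub_le hε hv α

theorem linearIndependent_of_abs_inner_sub_le {v : ι → E} {ε : ℝ} (hε : 0 ≤ ε)
    (hεcard : ε * Fintype.card ι < 1)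
    (hv : ∀ i j, |inner ℝ (v i) (v j) - (if i = j then 1 else 0)| ≤ ε) :
    LinearIndependent ℝ v := by
  rw [Fintype.linearIndependent_iff]
  intro α hα i
  have hnear := abs_norm_sq_sum_smul_sub_le (c := 1) hε (by simpa using hv) α
  rw [hα, norm_zero, one_mul, abs_sub_comm, sq, mul_zero, sub_zero,
    abs_of_nonneg (sum_nonneg fun i _ => sq_nonneg (α i))] at hnear
  have hsum : ∑ i, α i ^ 2 = 0 := by
    nlinarith [sum_nonneg fun i (_ : i ∈ univ) => sq_nonneg (α i)]
  exact pow_eq_zero_iff two_ne_zero |>.mp <|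
    (sum_eq_zero_iff_of_nonneg fun i _ => sq_nonneg (α i)).mp hsum i (mem_univ i)

end GramPerturbation

theorem le_mul_of_le_add_of_sub_le {a b Λ x : ℝ} (hΛ : 0 ≤ Λ) (hx : 0 ≤ x) (hx2 : x ≤ 1 / 2)
    (ha : a ≤ Λ + x) (hb : 1 - x ≤ b) : a ≤ (Λ + 2 * (1 + Λ) * x) * b :=
  calc a ≤ Λ + x := ha
    _ ≤ Λ + x + x * (1 + Λ) * (1 - 2 * x) := le_add_of_nonneg_right (by
        have : 0 ≤ 1 - 2 * x := by linarith
        positivity)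
    _ = (Λ + 2 * (1 + Λ) * x) * (1 - x) := by ring
    _ ≤ (Λ + 2 * (1 + Λ) * x) * b := mul_le_mul_of_nonneg_left hb (by positivity)

theorem rayleigh_quotient_bound_abstract
    {V W : Type*} [NormedAddCommGroup V] [InnerProductSpace ℝ V]
    [NormedAddCommGroup W] [InnerProductSpace ℝ W]
    (N : ℕ) (Λ ε : ℝ) (hΛ : 0 < Λ) (hε : 0 < ε) (hεN : ε ≤ 1 / (2 * N))
    (Φ : Fin N → V) (Ψ : Fin N → W)
    (hΦ : ∀ j k, |(inner ℝ (Φ j) (Φ k) : ℝ) - (if j = k then 1 else 0)| ≤ ε)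
    (hΨ : ∀ j k, |(inner ℝ (Ψ j) (Ψ k) : ℝ) - Λ * (if j = k then 1 else 0)| ≤ ε) :
    LinearIndependent ℝ Φ ∧
    ∀ α : Fin N → ℝ, ∑ j, (α j) ^ 2 = 1 →
      ‖∑ j, α j • Ψ j‖ ^ 2 ≤ (Λ + 2 * N * (1 + Λ) * ε) * ‖∑ j, α j • Φ j‖ ^ 2 := by
  have hεN_half : ε * N ≤ 1 / 2 := by
    rcases eq_or_ne N 0 with rfl | hN
    · norm_num
    · rw [le_div_iff₀ (by positivity)] at hεN
      linarith
  refine ⟨linearIndependent_of_abs_inner_sub_le hε.le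
    (by simpa using hεN_half.trans_lt one_half_lt_one) hΦ, fun α hα => ?_⟩
  have hΦα := abs_norm_sq_sum_smul_sub_le (c := 1) hε.le (by simpa using hΦ) α
  have hΨα := abs_norm_sq_sum_smul_sub_le hε.le hΨ α
  simp only [hα, Fintype.card_fin, mul_one] at hΦα hΨα
  have h := le_mul_of_le_add_of_sub_le (a := ‖∑ j, α j • Ψ j‖ ^ 2) (b := ‖∑ j, α j • Φ j‖ ^ 2)
    hΛ.le (by positivity) hεN_half (by linarith [(abs_le.mp hΨα).2])
    (by linarith [(abs_le.mp hΦα).1])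
  convert h using 2
  ring
end
end
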